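/- Let $0<\delta<1$, and suppose cubes $I, J$ are disjoint, $\ell(I)\le\ell(J)$, $\operatorname{dist}(I,J)\le\ell(J)$, and $\operatorname{dist}(I,\partial J)\ge \ell(J)^{1-\delta}\ell(I)^{\delta}$, where $\delta = \frac{\epsilon}{2(d+\epsilon)}$. Then for all $t\in I$, $s\in J$: $\frac{\ell(I)^{\epsilon}}{|t-s|^{d+\epsilon}} \le A\left(\frac{\ell(I)}{\ell(J)}\right)^{\epsilon/2}\frac{\ell(J)^{\epsilon}}{(\ell(I)+\operatorname{dist}(I,J)+\ell(J))^{d+\epsilon}}$, with $A$ depending only on $d,\epsilon$. -/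
import Mathlib


open MeasureTheory Set
open scoped ENNReal
noncomputable section

/-- Points of `ℝ^d`. -/
abbrev Rd (d : ℕ) := Fin d → ℝ

/-- The (closed, axis-parallel) cube with lower-left corner `a` and side length `ℓ`. -/
def cube {d : ℕ} (a : Rd d) (ℓ : ℝ) : Set (Rd d) := {x | ∀ i, a i ≤ x i ∧ x i ≤ a i + ℓ}

/-- Distance between two sets: `inf { dist x y : x ∈ s, y ∈ t }`. -/
def setDist {X : Type*} [PseudoMetricSpace X] (s t : Set X) : ℝ :=
  sInf ((fun p : X × X => dist p.1 p.2) '' s ×ˢ t)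

/-- A segment from a point outside a set to a point inside meets the frontier. -/
lemma segment_meets_frontier {E : Type*} [NormedAddCommGroup E] [NormedSpace ℝ E]
    {J : Set E} {t s : E} (ht : t ∉ J) (hs : s ∈ J) :
    ∃ p ∈ frontier J, dist t p ≤ dist t s := by
  by_cases hseg : (segment ℝ t s ∩ frontier J).Nonempty
  · obtain ⟨p, hp1, hp2⟩ := hseg
    exact ⟨p, hp2, by
      have := dist_add_dist_of_mem_segment hp1
      linarith [dist_nonneg (x := p) (y := s)]⟩
  · exfalso
    rw [Set.not_nonempty_iff_eq_empty] at hseg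
    have hconn : IsPreconnected (segment ℝ t s) := (convex_segment t s).isPreconnected
    have hcover : segment ℝ t s ⊆ interior J ∪ interior Jᶜ := by
      intro x hx
      have hxf : x ∉ frontier J := fun h => by
        have : x ∈ segment ℝ t s ∩ frontier J := ⟨hx, h⟩
        simp [hseg] at this
      by_cases hxJ : x ∈ closure J
      · left
        have hx2 : x ∈ interior J ∪ frontier J := by
          rw [← closure_eq_interior_union_frontier]; exact hxJ
        rcases hx2 with h | h
        · exact h
        · exact absurd h hxf
      · right
        rw [interior_compl]
        exact hxJ
    have h1 : (segment ℝ t s ∩ interior J).Nonempty := by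
      refine ⟨s, right_mem_segment ℝ t s, ?_⟩
      rcases hcover (right_mem_segment ℝ t s) with h | h
      · exact h
      · exact absurd (interior_subset h) (by simpa using hs)
    have h2 : (segment ℝ t s ∩ interior Jᶜ).Nonempty := by
      refine ⟨t, left_mem_segment ℝ t s, ?_⟩
      rcases hcover (left_mem_segment ℝ t s) with h | h
      · exact absurd (interior_subset h) ht
      · exact h
    obtain ⟨x, _, hxJ, hxJc⟩ := hconn (interior J) (interior Jᶜ) isOpen_interior
      isOpen_interior hcover h1 h2
    exact (interior_subset hxJc) (interior_subset hxJ)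

lemma setDist_nonneg {X : Type*} [PseudoMetricSpace X] (s t : Set X) : 0 ≤ setDist s t := by
  apply Real.sInf_nonneg
  rintro x ⟨p, _, rfl⟩
  exact dist_nonneg

lemma setDist_le_dist {X : Type*} [PseudoMetricSpace X] {s t : Set X} {x y : X}
    (hx : x ∈ s) (hy : y ∈ t) : setDist s t ≤ dist x y := by
  apply csInf_le
  · exact ⟨0, by rintro z ⟨p, _, rfl⟩; exact dist_nonneg⟩
  · exact ⟨(x, y), ⟨hx, hy⟩, rfl⟩

/-- Kernel estimate for disjoint cubes respecting the goodness condition.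
With `δ = ε/(2(d+ε))`: if `I, J` are disjoint, `ℓ(I) ≤ ℓ(J)`, `dist(I,J) ≤ ℓ(J)` and
`dist(I,∂J) ≥ ℓ(J)^{1-δ} ℓ(I)^δ`, then for `t ∈ I`, `s ∈ J`:
`ℓ(I)^ε/|t-s|^{d+ε} ≤ A (ℓ(I)/ℓ(J))^{ε/2} ℓ(J)^ε/(ℓ(I)+dist(I,J)+ℓ(J))^{d+ε}`. -/
theorem stmt8 {d : ℕ} (hd : 0 < d) (ε : ℝ) (hε : 0 < ε) :
    ∃ A : ℝ, 0 < A ∧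
      ∀ (aI : Rd d) (ℓI : ℝ) (aJ : Rd d) (ℓJ : ℝ), 0 < ℓI → ℓI ≤ ℓJ →
        Disjoint (cube aI ℓI) (cube aJ ℓJ) →
        setDist (cube aI ℓI) (cube aJ ℓJ) ≤ ℓJ →
        ℓJ ^ ((1 : ℝ) - ε / (2 * ((d : ℝ) + ε))) * ℓI ^ (ε / (2 * ((d : ℝ) + ε)))
          ≤ setDist (cube aI ℓI) (frontier (cube aJ ℓJ)) →
        ∀ t ∈ cube aI ℓI, ∀ s ∈ cube aJ ℓJ,
          ℓI ^ ε / ‖t - s‖ ^ ((d : ℝ) + ε)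
            ≤ A * (ℓI / ℓJ) ^ (ε / 2)
                * (ℓJ ^ ε / (ℓI + setDist (cube aI ℓI) (cube aJ ℓJ) + ℓJ) ^ ((d : ℝ) + ε)) := by
  have hde : (0 : ℝ) < (d : ℝ) + ε := by positivity
  refine ⟨(3 : ℝ) ^ ((d : ℝ) + ε), Real.rpow_pos_of_pos (by norm_num) _, ?_⟩
  intro aI ℓI aJ ℓJ hℓI hle hdisj hDle hgood t ht s hs
  have hℓJ : (0 : ℝ) < ℓJ := lt_of_lt_of_le hℓI hle
  set δ : ℝ := ε / (2 * ((d : ℝ) + ε)) with hδdef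
  set M : ℝ := ℓJ ^ ((1 : ℝ) - δ) * ℓI ^ δ with hMdef
  have hM : 0 < M := mul_pos (Real.rpow_pos_of_pos hℓJ _) (Real.rpow_pos_of_pos hℓI _)
  set D : ℝ := setDist (cube aI ℓI) (cube aJ ℓJ) with hDdef
  have hD : 0 ≤ D := setDist_nonneg _ _
  -- ‖t - s‖ ≥ M
  have htJ : t ∉ cube aJ ℓJ := Set.disjoint_left.mp hdisj ht
  obtain ⟨p, hp, hple⟩ := segment_meets_frontier htJ hs
  have hXM : M ≤ ‖t - s‖ := by
    calc M ≤ setDist (cube aI ℓI) (frontier (cube aJ ℓJ)) := hgood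
      _ ≤ dist t p := setDist_le_dist ht hp
      _ ≤ dist t s := hple
      _ = ‖t - s‖ := dist_eq_norm t s
  have hX : 0 < ‖t - s‖ := lt_of_lt_of_le hM hXM
  -- exponent facts
  have hδde : δ * ((d : ℝ) + ε) = ε / 2 := by
    rw [hδdef]; field_simp
  have h1δde : ((1 : ℝ) - δ) * ((d : ℝ) + ε) = (d : ℝ) + ε - ε / 2 := by
    rw [sub_mul, one_mul, hδde]
  -- M ^ (d+ε)
  have hMpow : M ^ ((d : ℝ) + ε) = ℓJ ^ ((d : ℝ) + ε - ε / 2) * ℓI ^ (ε / 2) := by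
    rw [hMdef, Real.mul_rpow (Real.rpow_nonneg hℓJ.le _) (Real.rpow_nonneg hℓI.le _),
      ← Real.rpow_mul hℓJ.le, ← Real.rpow_mul hℓI.le, h1δde, hδde]
  -- step 1: replace ‖t-s‖ by M
  have step1 : ℓI ^ ε / ‖t - s‖ ^ ((d : ℝ) + ε) ≤ ℓI ^ ε / M ^ ((d : ℝ) + ε) := by
    gcongr

  have hLpos : (0:ℝ) < ℓI ^ ε / M ^ ((d : ℝ) + ε) := by positivity
  have key : ℓI ^ ε / M ^ ((d : ℝ) + ε)
      = (ℓI / ℓJ) ^ (ε / 2) * (ℓJ ^ ε / ℓJ ^ ((d : ℝ) + ε)) := by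
    have hRpos : (0:ℝ) < (ℓI / ℓJ) ^ (ε / 2) * (ℓJ ^ ε / ℓJ ^ ((d : ℝ) + ε)) := by positivity
    apply Real.log_injOn_pos (Set.mem_Ioi.mpr hLpos) (Set.mem_Ioi.mpr hRpos)
    rw [Real.log_div (by positivity) (by positivity),
      Real.log_mul (by positivity) (by positivity),
      Real.log_div (by positivity) (by positivity), hMdef]
    simp only [Real.log_rpow hℓI, Real.log_rpow hℓJ,
      Real.log_rpow (show (0:ℝ) < ℓJ ^ ((1:ℝ) - δ) * ℓI ^ δ by positivity),
      Real.log_rpow (div_pos hℓI hℓJ),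
      Real.log_mul (ne_of_gt (Real.rpow_pos_of_pos hℓJ _))
        (ne_of_gt (Real.rpow_pos_of_pos hℓI _)),
      Real.log_div hℓI.ne' hℓJ.ne']
    rw [hδdef]
    field_simp
    ring
  have hsum : (0:ℝ) < ℓI + D + ℓJ := by linarith
  have hsum3 : ℓI + D + ℓJ ≤ 3 * ℓJ := by linarith
  calc ℓI ^ ε / ‖t - s‖ ^ ((d : ℝ) + ε)
      ≤ ℓI ^ ε / M ^ ((d : ℝ) + ε) := step1
    _ = (3:ℝ) ^ ((d : ℝ) + ε) * (ℓI / ℓJ) ^ (ε / 2)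
        * (ℓJ ^ ε / (3 * ℓJ) ^ ((d : ℝ) + ε)) := by
        rw [key, Real.mul_rpow (by norm_num) hℓJ.le]
        have h3 : (0:ℝ) < (3:ℝ) ^ ((d : ℝ) + ε) := Real.rpow_pos_of_pos (by norm_num) _
        field_simp
    _ ≤ (3:ℝ) ^ ((d : ℝ) + ε) * (ℓI / ℓJ) ^ (ε / 2)
        * (ℓJ ^ ε / (ℓI + D + ℓJ) ^ ((d : ℝ) + ε)) := by
        gcongr
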